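/- Let α ∈ [0,1] and let β_0, …, β_{d−1} be independent real-valued random variables with P(β_k > 0) = α and P(β_k < 0) = 1 − α for every k, and let p_m be the probability that P(y) = Σ_{k=0}^{d−1} β_k·C(d−1,k)·y^k has exactly m roots in (0, ∞) counted with multiplicity. Then: for d = 2, p_0 = α² + (1−α)² and p_1 = 2α(1−α); and for d = 3, p_1 = 2α(1−α). -/

import Mathlib

open MeasureTheory ProbabilityTheory Polynomial

/-- The number of roots in `(0, ∞)`, counted with multiplicity, of the polynomial
`P(y) = Σ_{k=0}^{d−1} β_k · C(d−1, k) · y^k`. Its positive roots are the internal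
equilibria of a `d`-player two-strategy random evolutionary game. -/
noncomputable def numInternalEquilibria (d : ℕ) (β : Fin d → ℝ) : ℕ :=
  Multiset.card (Multiset.filter (fun y => 0 < y)
    (Polynomial.roots (∑ k : Fin d,
      Polynomial.C (β k * ((d - 1).choose (k : ℕ) : ℝ)) * Polynomial.X ^ (k : ℕ))))

/-!
Almost surely no coefficient vanishes. For `d = 2` the polynomial is linear, with the single
root `-β₀/β₁`, which is positive exactly when `β₀` and `β₁` have opposite signs. For `d = 3`
it is a quadratic with roots `y₁, y₂` and Vieta gives `β₂ y₁ y₂ = β₀`, so it has exactly one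
positive root exactly when `β₀` and `β₂` have opposite signs. By independence, two
coefficients have opposite signs with probability `2α(1-α)` and equal signs with probability
`α² + (1-α)²`.
-/

noncomputable def positiveRootCount (p : ℝ[X]) : ℕ :=
  Multiset.card (p.roots.filter (0 < ·))

lemma positiveRootCount_linear {a b : ℝ} (hb : b ≠ 0) :
    positiveRootCount (C b * X + C a) = if a * b < 0 then 1 else 0 := by
  have hroot_pos : 0 < -(b⁻¹ * a) ↔ a * b < 0 := by
    rw [neg_pos, ← div_eq_inv_mul, div_neg_iff, mul_neg_iff]
  unfold positiveRootCount
  rw [roots_C_mul_X_add_C a hb, Multiset.filter_singleton]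
  split_ifs <;> simp_all

lemma exists_roots_quadratic_eq_pair {a b c : ℝ} (ha : a ≠ 0) (hd : 0 ≤ discrim a b c) :
    ∃ x₁ x₂, (C a * X ^ 2 + C b * X + C c).roots = {x₁, x₂} := by
  set s := √(discrim a b c)
  have hs : s ^ 2 = b ^ 2 - 4 * a * c := by rw [Real.sq_sqrt hd, discrim]
  refine ⟨(-b + s) / (2 * a), (-b - s) / (2 * a),
    (roots_quadratic_eq_pair_iff_of_ne_zero ha).2 ⟨?_, ?_⟩⟩
  · field_simp
    ring
  · field_simp
    linear_combination hs

lemma roots_quadratic_eq_zero {a b c : ℝ} (hd : discrim a b c < 0) :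
    (C a * X ^ 2 + C b * X + C c).roots = 0 := by
  refine Multiset.eq_zero_of_forall_notMem fun x hx => ?_
  have hx : a * (x * x) + b * x + c = 0 := by
    simpa [sq] using (mem_roots'.1 hx).2
  exact quadratic_ne_zero_of_discrim_ne_sq (fun s => by nlinarith [sq_nonneg s]) x hx

lemma card_filter_pos_pair_eq_one_iff {x₁ x₂ : ℝ} (h₁ : x₁ ≠ 0) (h₂ : x₂ ≠ 0) :
    Multiset.card (({x₁, x₂} : Multiset ℝ).filter (0 < ·)) = 1 ↔ x₁ * x₂ < 0 := by
  rcases h₁.lt_or_gt with h₁ | h₁ <;> rcases h₂.lt_or_gt with h₂ | h₂ <;>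
    simp [Multiset.insert_eq_cons, Multiset.filter_singleton, h₁, h₂, h₁.not_gt, h₂.not_gt,
      mul_neg_iff]

lemma positiveRootCount_quadratic_eq_one_iff {a b c : ℝ} (ha : a ≠ 0) (hc : c ≠ 0) :
    positiveRootCount (C a * X ^ 2 + C b * X + C c) = 1 ↔ a * c < 0 := by
  unfold positiveRootCount
  rcases lt_or_ge (discrim a b c) 0 with hd | hd
  · have hac : ¬ a * c < 0 := fun hac => by
      rw [discrim] at hd
      nlinarith [sq_nonneg b]
    simp [roots_quadratic_eq_zero hd, hac]
  · obtain ⟨x₁, x₂, hroots⟩ := exists_roots_quadratic_eq_pair ha hd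
    have hvieta : c = a * x₁ * x₂ := eq_mul_mul_of_roots_quadratic_eq_pair hroots
    have hx₁ : x₁ ≠ 0 := by rintro rfl; simp [hvieta] at hc
    have hx₂ : x₂ ≠ 0 := by rintro rfl; simp [hvieta] at hc
    have hac : a * c = a ^ 2 * (x₁ * x₂) := by rw [hvieta]; ring
    rw [hroots, card_filter_pos_pair_eq_one_iff hx₁ hx₂, hac]
    have ha2 : 0 < a ^ 2 := by positivity
    constructor <;> intro h <;> nlinarith

lemma numInternalEquilibria_two (f : Fin 2 → ℝ) :
    numInternalEquilibria 2 f = positiveRootCount (C (f 1) * X + C (f 0)) := by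
  simp [numInternalEquilibria, positiveRootCount, Fin.sum_univ_two, add_comm]

lemma numInternalEquilibria_three (f : Fin 3 → ℝ) :
    numInternalEquilibria 3 f =
      positiveRootCount (C (f 2) * X ^ 2 + C (2 * f 1) * X + C (f 0)) := by
  simp only [numInternalEquilibria, positiveRootCount, Fin.sum_univ_three]
  congr 3
  simp [C_mul, map_ofNat]
  ring

lemma numInternalEquilibria_two_eq_zero_iff {f : Fin 2 → ℝ} (h₀ : f 0 ≠ 0) (h₁ : f 1 ≠ 0) :
    numInternalEquilibria 2 f = 0 ↔ 0 < f 0 * f 1 := by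
  rw [numInternalEquilibria_two, positiveRootCount_linear h₁]
  have := (mul_ne_zero h₀ h₁).lt_or_gt
  split_ifs <;> simp_all [not_lt_of_gt]

lemma numInternalEquilibria_two_eq_one_iff {f : Fin 2 → ℝ} (h₁ : f 1 ≠ 0) :
    numInternalEquilibria 2 f = 1 ↔ f 0 * f 1 < 0 := by
  rw [numInternalEquilibria_two, positiveRootCount_linear h₁]
  split_ifs <;> simp_all

lemma numInternalEquilibria_three_eq_one_iff {f : Fin 3 → ℝ} (h₀ : f 0 ≠ 0) (h₂ : f 2 ≠ 0) :
    numInternalEquilibria 3 f = 1 ↔ f 0 * f 2 < 0 := by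
  rw [numInternalEquilibria_three, positiveRootCount_quadratic_eq_one_iff h₂ h₀, mul_comm]

namespace ProbabilityTheory

variable {Ω : Type*} [MeasurableSpace Ω] {μ : Measure Ω} {g h : Ω → ℝ}

lemma ae_ne_zero_of_measure_pos_add_measure_neg [IsProbabilityMeasure μ] (hg : Measurable g)
    (hsign : μ {ω | 0 < g ω} + μ {ω | g ω < 0} = 1) : ∀ᵐ ω ∂μ, g ω ≠ 0 := by
  have hunion : {ω | g ω ≠ 0} = {ω | 0 < g ω} ∪ {ω | g ω < 0} := by
    ext ω
    exact ne_iff_lt_or_gt.trans or_comm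
  have hdisj : Disjoint {ω | 0 < g ω} {ω | g ω < 0} :=
    Set.disjoint_left.2 fun ω (h₁ : 0 < g ω) (h₂ : g ω < 0) => h₁.not_gt h₂
  change μ {ω | g ω ≠ 0}ᶜ = 0
  have hneg : MeasurableSet {ω | g ω < 0} := measurableSet_lt hg measurable_const
  rw [hunion, prob_compl_eq_zero_iff ((measurableSet_lt measurable_const hg).union hneg),
    measure_union hdisj hneg, hsign]

lemma IndepFun.measure_preimage_inter_union_preimage_inter (hind : IndepFun g h μ)
    (hg : Measurable g) (hh : Measurable h) {s t s' t' : Set ℝ} (hs : MeasurableSet s)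
    (ht : MeasurableSet t) (hs' : MeasurableSet s') (ht' : MeasurableSet t')
    (hdisj : Disjoint s s') :
    μ (g ⁻¹' s ∩ h ⁻¹' t ∪ g ⁻¹' s' ∩ h ⁻¹' t') =
      μ (g ⁻¹' s) * μ (h ⁻¹' t) + μ (g ⁻¹' s') * μ (h ⁻¹' t') := by
  have hdisj' : Disjoint (g ⁻¹' s ∩ h ⁻¹' t) (g ⁻¹' s' ∩ h ⁻¹' t') :=
    (hdisj.preimage g).mono Set.inter_subset_left Set.inter_subset_left
  rw [measure_union hdisj' ((hg hs').inter (hh ht')),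
    hind.measure_inter_preimage_eq_mul _ _ hs ht, hind.measure_inter_preimage_eq_mul _ _ hs' ht']

lemma IndepFun.measure_mul_neg (hind : IndepFun g h μ) (hg : Measurable g) (hh : Measurable h) :
    μ {ω | g ω * h ω < 0} =
      μ {ω | 0 < g ω} * μ {ω | h ω < 0} + μ {ω | g ω < 0} * μ {ω | 0 < h ω} := by
  have hset : {ω | g ω * h ω < 0} =
      g ⁻¹' Set.Ioi (0 : ℝ) ∩ h ⁻¹' Set.Iio 0 ∪ g ⁻¹' Set.Iio 0 ∩ h ⁻¹' Set.Ioi 0 := by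
    ext ω
    exact mul_neg_iff (a := g ω)
  rw [hset]
  exact hind.measure_preimage_inter_union_preimage_inter hg hh measurableSet_Ioi
    measurableSet_Iio measurableSet_Iio measurableSet_Ioi Set.Ioi_disjoint_Iio_same

lemma IndepFun.measure_mul_pos (hind : IndepFun g h μ) (hg : Measurable g) (hh : Measurable h) :
    μ {ω | 0 < g ω * h ω} =
      μ {ω | 0 < g ω} * μ {ω | 0 < h ω} + μ {ω | g ω < 0} * μ {ω | h ω < 0} := by
  have hset : {ω | 0 < g ω * h ω} =
      g ⁻¹' Set.Ioi (0 : ℝ) ∩ h ⁻¹' Set.Ioi 0 ∪ g ⁻¹' Set.Iio 0 ∩ h ⁻¹' Set.Iio 0 := by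
    ext ω
    exact mul_pos_iff (a := g ω)
  rw [hset]
  exact hind.measure_preimage_inter_union_preimage_inter hg hh measurableSet_Ioi
    measurableSet_Ioi measurableSet_Iio measurableSet_Iio Set.Ioi_disjoint_Iio_same

end ProbabilityTheory

lemma ENNReal.toReal_ofReal_mul_add_ofReal_mul {a b c d : ℝ} (ha : 0 ≤ a) (hb : 0 ≤ b)
    (hc : 0 ≤ c) (hd : 0 ≤ d) :
    (ENNReal.ofReal a * ENNReal.ofReal b + ENNReal.ofReal c * ENNReal.ofReal d).toReal =
      a * b + c * d := by
  rw [← ENNReal.ofReal_mul ha, ← ENNReal.ofReal_mul hc,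
    ← ENNReal.ofReal_add (by positivity) (by positivity), ENNReal.toReal_ofReal (by positivity)]

theorem prob_internalEquilibria_small_d_general_general
    {Ω : Type*} [MeasurableSpace Ω] (μ : Measure Ω) [IsProbabilityMeasure μ]
    (d : ℕ) (α : ℝ) (hα : α ∈ Set.Icc (0 : ℝ) 1)
    (β : Fin d → Ω → ℝ)
    (hmeas : ∀ k, Measurable (β k))
    (hindep : iIndepFun β μ)
    (hpos : ∀ k, μ {ω | 0 < β k ω} = ENNReal.ofReal α)
    (hneg : ∀ k, μ {ω | β k ω < 0} = ENNReal.ofReal (1 - α)) :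
    (d = 2 →
      (μ {ω | numInternalEquilibria d (fun k => β k ω) = 0}).toReal =
          α ^ 2 + (1 - α) ^ 2 ∧
        (μ {ω | numInternalEquilibria d (fun k => β k ω) = 1}).toReal =
          2 * α * (1 - α)) ∧
    (d = 3 →
      (μ {ω | numInternalEquilibria d (fun k => β k ω) = 1}).toReal =
        2 * α * (1 - α)) := by
  obtain ⟨hα₀, hα₁⟩ := hα
  have hne : ∀ k, ∀ᵐ ω ∂μ, β k ω ≠ 0 := fun k =>
    ae_ne_zero_of_measure_pos_add_measure_neg (hmeas k) <| by
      rw [hpos, hneg, ← ENNReal.ofReal_add hα₀ (by linarith), add_sub_cancel, ENNReal.ofReal_one]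
  have hdiffer {i j : Fin d} (hij : i ≠ j) :
      (μ {ω | β i ω * β j ω < 0}).toReal = 2 * α * (1 - α) := by
    rw [(hindep.indepFun hij).measure_mul_neg (hmeas i) (hmeas j), hpos, hpos, hneg, hneg,
      ENNReal.toReal_ofReal_mul_add_ofReal_mul hα₀ (by linarith) (by linarith) hα₀]
    ring
  have hagree {i j : Fin d} (hij : i ≠ j) :
      (μ {ω | 0 < β i ω * β j ω}).toReal = α ^ 2 + (1 - α) ^ 2 := by
    rw [(hindep.indepFun hij).measure_mul_pos (hmeas i) (hmeas j), hpos, hpos, hneg, hneg,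
      ENNReal.toReal_ofReal_mul_add_ofReal_mul hα₀ hα₀ (by linarith) (by linarith)]
    ring
  have hcongr {p q : Ω → Prop} (h : ∀ᵐ ω ∂μ, p ω ↔ q ω) : μ {ω | p ω} = μ {ω | q ω} :=
    measure_congr (Filter.eventuallyEq_set.2 h)
  refine ⟨?_, ?_⟩ <;> rintro rfl
  · refine ⟨?_, ?_⟩
    · rw [hcongr (by filter_upwards [hne 0, hne 1] with ω h₀ h₁
        using numInternalEquilibria_two_eq_zero_iff h₀ h₁)]
      exact hagree (by decide)
    · rw [hcongr (by filter_upwards [hne 1] with ω h₁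
        using numInternalEquilibria_two_eq_one_iff h₁)]
      exact hdiffer (by decide)
  · rw [hcongr (by filter_upwards [hne 0, hne 2] with ω h₀ h₂
      using numInternalEquilibria_three_eq_one_iff h₀ h₂)]
    exact hdiffer (by decide)

/-- For a `d`-player two-strategy random evolutionary game with
`P(β_k > 0) = α` and `P(β_k < 0) = 1 − α`: for `d = 2`, `p_0 = α² + (1−α)²` and
`p_1 = 2α(1−α)`; and for `d = 3`, `p_1 = 2α(1−α)`. -/
theorem prob_internalEquilibria_small_d_general
    {Ω : Type*} [MeasurableSpace Ω] (μ : Measure Ω) [IsProbabilityMeasure μ]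
    (d : ℕ) (hd : 2 ≤ d) (α : ℝ) (hα : α ∈ Set.Icc (0 : ℝ) 1)
    (β : Fin d → Ω → ℝ)
    (hmeas : ∀ k, Measurable (β k))
    (hindep : iIndepFun β μ)
    (hpos : ∀ k, μ {ω | 0 < β k ω} = ENNReal.ofReal α)
    (hneg : ∀ k, μ {ω | β k ω < 0} = ENNReal.ofReal (1 - α)) :
    (d = 2 →
      (μ {ω | numInternalEquilibria d (fun k => β k ω) = 0}).toReal =
          α ^ 2 + (1 - α) ^ 2 ∧
        (μ {ω | numInternalEquilibria d (fun k => β k ω) = 1}).toReal =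
          2 * α * (1 - α)) ∧
    (d = 3 →
      (μ {ω | numInternalEquilibria d (fun k => β k ω) = 1}).toReal =
        2 * α * (1 - α)) :=
  prob_internalEquilibria_small_d_general_general μ d α hα β hmeas hindep hpos hneg
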